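/- Let V and M be real Hilbert spaces, a : V × V → ℝ and b : V × M → ℝ bounded bilinear forms. Suppose a is coercive on the kernel K = {v ∈ V : b(v,τ) = 0 ∀τ ∈ M} with constant α > 0, and b satisfies the inf-sup condition with constant β > 0. Then for every g ∈ M there exists a unique pair (u, σ) ∈ V × M such that a(u,v) − b(v,σ) = 0 for all v ∈ V and −b(u,τ) = −⟨g,τ⟩ for all τ ∈ M; moreover ‖u‖_V + ‖σ‖_M ≤ C‖g‖_M with C depending only on α, β and the continuity constants. -/

import Mathlib

/-!
Let `B* = rieszAdjoint b : M → V` send `τ` to the Riesz representative of `b (·) τ`.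
The inf-sup condition says `β ‖τ‖ ≤ ‖B* τ‖`, so `B*` has closed range, and since
`ker b = (range B*)ᗮ` this range is `(ker b)ᗮ`; equivalently, a functional vanishing on `ker b`
is of the form `b (·) σ`, and `b` maps `(ker b)ᗮ` onto `M` with `β ‖x‖ ≤ ‖b x‖`.

Existence: pick `u₁` with `b u₁ = ⟪g, ·⟫` (Lax–Milgram for the coercive form
`⟪B* ·, B* ·⟫` on `M`), correct it by `u₀ ∈ ker b` so that `a (u₀ + u₁)` vanishes on `ker b`
(Lax–Milgram on `ker b`), and read off `σ` from the factorization above.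
Stability: split `u = y + z` with `y ∈ ker b`, `z ∈ (ker b)ᗮ`; then `‖z‖ ≤ ‖g‖ / β`, coercivity
on the kernel and `a u y = b y σ = 0` give `α ‖y‖ ≤ ‖a‖ ‖z‖`, and `B* σ` represents `a u`, so
`β ‖σ‖ ≤ ‖a‖ ‖u‖`. Uniqueness is stability for `g = 0`.
-/

open scoped RealInnerProductSpace

open InnerProductSpace

section

variable {V M : Type*} [NormedAddCommGroup V] [InnerProductSpace ℝ V]
  [NormedAddCommGroup M] [InnerProductSpace ℝ M]

lemma mul_le_of_mul_mul_self_le {c d x : ℝ} (hx : 0 ≤ x) (hd : 0 ≤ d)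
    (h : c * x * x ≤ d * x) : c * x ≤ d := by
  rcases hx.eq_or_lt with rfl | hx
  · simpa using hd
  · exact le_of_mul_le_mul_right h hx

lemma exists_mem_forall_apply_eq (a : V →L[ℝ] V →L[ℝ] ℝ) (K : Submodule ℝ V) [CompleteSpace K]
    {α : ℝ} (hα : 0 < α) (hcoer : ∀ v ∈ K, α * ‖v‖ ^ 2 ≤ a v v) (f : V →L[ℝ] ℝ) :
    ∃ u ∈ K, ∀ v ∈ K, a u v = f v := by
  have hK : IsCoercive (a.bilinearComp K.subtypeL K.subtypeL) :=
    ⟨α, hα, fun v ↦ by simpa [sq, mul_assoc] using hcoer v v.2⟩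
  obtain ⟨u, hu⟩ :=
    hK.continuousLinearEquivOfBilin.surjective ((toDual ℝ K).symm (f.comp K.subtypeL))
  refine ⟨u, u.2, fun v hv ↦ ?_⟩
  have := hK.continuousLinearEquivOfBilin_apply u ⟨v, hv⟩
  rw [hu, toDual_symm_apply] at this
  exact this.symm

def IsMixedSolution (a : V →L[ℝ] V →L[ℝ] ℝ) (b : V →L[ℝ] M →L[ℝ] ℝ) (g : M) (u : V) (σ : M) :
    Prop :=
  a u = b.flip σ ∧ b u = innerSL ℝ g

section MixedProblem

variable {a : V →L[ℝ] V →L[ℝ] ℝ} {b : V →L[ℝ] M →L[ℝ] ℝ} {α β : ℝ} {g : M} {u u' : V}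
  {σ σ' : M}

lemma isMixedSolution_iff : ((∀ v : V, a u v - b v σ = 0) ∧ (∀ τ : M, -(b u τ) = -⟪g, τ⟫)) ↔
    IsMixedSolution a b g u σ := by
  simp [IsMixedSolution, ContinuousLinearMap.ext_iff, sub_eq_zero]

lemma IsMixedSolution.sub (h : IsMixedSolution a b g u σ) (h' : IsMixedSolution a b g u' σ') :
    IsMixedSolution a b 0 (u - u') (σ - σ') := by
  simp [IsMixedSolution, h.1, h.2, h'.1, h'.2]

section Riesz

variable [CompleteSpace V]

noncomputable def rieszAdjoint (b : V →L[ℝ] M →L[ℝ] ℝ) : M →L[ℝ] V :=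
  (toDual ℝ V).symm.toContinuousLinearEquiv.toContinuousLinearMap.comp b.flip

@[simp]
lemma inner_rieszAdjoint (τ : M) (v : V) : ⟪rieszAdjoint b τ, v⟫ = b v τ := by
  simp [rieszAdjoint]

lemma ker_eq_orthogonal_range_rieszAdjoint : b.ker = ((rieszAdjoint b).range)ᗮ := by
  ext v
  simp [Submodule.mem_orthogonal, ContinuousLinearMap.ext_iff]

lemma mul_norm_le_norm_rieszAdjoint
    (hinfsup : ∀ τ : M, β * ‖τ‖ ≤ ⨆ v : {v : V // v ≠ 0}, b v τ / ‖(v : V)‖) (τ : M) :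
    β * ‖τ‖ ≤ ‖rieszAdjoint b τ‖ := by
  refine (hinfsup τ).trans (Real.iSup_le (fun ⟨v, hv⟩ ↦ ?_) (norm_nonneg _))
  rw [div_le_iff₀ (norm_pos_iff.mpr hv), ← inner_rieszAdjoint]
  exact real_inner_le_norm _ _

lemma IsMixedSolution.mul_norm_right_le (h : IsMixedSolution a b g u σ)
    (hlow : ∀ τ : M, β * ‖τ‖ ≤ ‖rieszAdjoint b τ‖) : β * ‖σ‖ ≤ ‖a‖ * ‖u‖ := by
  have hσ : rieszAdjoint b σ = (toDual ℝ V).symm (a u) :=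
    ext_inner_right ℝ fun v ↦ by simp [h.1]
  calc β * ‖σ‖ ≤ ‖rieszAdjoint b σ‖ := hlow σ
    _ = ‖a u‖ := by rw [hσ, LinearIsometryEquiv.norm_map]
    _ ≤ ‖a‖ * ‖u‖ := a.le_opNorm u

variable [CompleteSpace M]

lemma orthogonal_ker_eq_range_rieszAdjoint (hβ : 0 < β)
    (hlow : ∀ τ : M, β * ‖τ‖ ≤ ‖rieszAdjoint b τ‖) : b.kerᗮ = (rieszAdjoint b).range := by
  have hanti : AntilipschitzWith (β⁻¹).toNNReal (rieszAdjoint b) := by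
    refine ContinuousLinearMap.antilipschitz_of_bound _ fun τ ↦ ?_
    rw [Real.coe_toNNReal _ (inv_nonneg.mpr hβ.le), inv_mul_eq_div, le_div_iff₀' hβ]
    exact hlow τ
  have : CompleteSpace ((rieszAdjoint b).range) :=
    (hanti.isClosed_range (rieszAdjoint b).uniformContinuous).completeSpace_coe
  rw [ker_eq_orthogonal_range_rieszAdjoint, Submodule.orthogonal_orthogonal]

lemma mul_norm_le_norm_apply_of_mem_orthogonal_ker (hβ : 0 < β)
    (hlow : ∀ τ : M, β * ‖τ‖ ≤ ‖rieszAdjoint b τ‖) {x : V} (hx : x ∈ b.kerᗮ) :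
    β * ‖x‖ ≤ ‖b x‖ := by
  rw [orthogonal_ker_eq_range_rieszAdjoint hβ hlow] at hx
  obtain ⟨w, rfl⟩ := hx
  set x := rieszAdjoint b w
  refine mul_le_of_mul_mul_self_le (norm_nonneg _) (norm_nonneg _) ?_
  calc β * ‖x‖ * ‖x‖ = β * b x w := by
        rw [mul_assoc, ← real_inner_self_eq_norm_mul_norm, inner_rieszAdjoint]
    _ ≤ β * (‖b x‖ * ‖w‖) := by gcongr; exact (Real.le_norm_self _).trans ((b x).le_opNorm w)
    _ = ‖b x‖ * (β * ‖w‖) := by ring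
    _ ≤ ‖b x‖ * ‖x‖ := by gcongr; exact hlow w

lemma exists_apply_eq_innerSL (hβ : 0 < β) (hlow : ∀ τ : M, β * ‖τ‖ ≤ ‖rieszAdjoint b τ‖)
    (g : M) : ∃ u : V, b u = innerSL ℝ g := by
  have hcoer : IsCoercive (b.comp (rieszAdjoint b)) := by
    refine ⟨β * β, by positivity, fun τ ↦ ?_⟩
    calc β * β * ‖τ‖ * ‖τ‖ = (β * ‖τ‖) ^ 2 := by ring
      _ ≤ ‖rieszAdjoint b τ‖ ^ 2 := by gcongr; exact hlow τ
      _ = b (rieszAdjoint b τ) τ := by rw [← inner_rieszAdjoint, real_inner_self_eq_norm_sq]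
  obtain ⟨w, hw⟩ := hcoer.continuousLinearEquivOfBilin.surjective g
  refine ⟨rieszAdjoint b w, ContinuousLinearMap.ext fun τ ↦ ?_⟩
  rw [innerSL_apply_apply, ← hw, hcoer.continuousLinearEquivOfBilin_apply]
  rfl

lemma exists_flip_eq_of_ker_le (hβ : 0 < β) (hlow : ∀ τ : M, β * ‖τ‖ ≤ ‖rieszAdjoint b τ‖)
    {f : V →L[ℝ] ℝ} (hf : b.ker ≤ f.ker) : ∃ σ, b.flip σ = f := by
  have hx : (toDual ℝ V).symm f ∈ b.kerᗮ := (Submodule.mem_orthogonal' _ _).mpr fun v hv ↦ by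
    rw [toDual_symm_apply]
    exact hf hv
  rw [orthogonal_ker_eq_range_rieszAdjoint hβ hlow] at hx
  obtain ⟨σ, hσ : rieszAdjoint b σ = _⟩ := hx
  refine ⟨σ, ContinuousLinearMap.ext fun v ↦ ?_⟩
  rw [b.flip_apply, ← inner_rieszAdjoint, hσ, toDual_symm_apply]

lemma IsMixedSolution.norm_left_le (h : IsMixedSolution a b g u σ) (hα : 0 < α)
    (hcoer : ∀ v ∈ b.ker, α * ‖v‖ ^ 2 ≤ a v v) (hβ : 0 < β)
    (hlow : ∀ τ : M, β * ‖τ‖ ≤ ‖rieszAdjoint b τ‖) :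
    ‖u‖ ≤ (1 + ‖a‖ / α) * (‖g‖ / β) := by
  have : CompleteSpace b.ker := b.isClosed_ker.completeSpace_coe
  obtain ⟨y, hy, z, hz, rfl⟩ := b.ker.exists_add_mem_mem_orthogonal u
  have hby : b y = 0 := hy
  have hz_le : ‖z‖ ≤ ‖g‖ / β := by
    rw [le_div_iff₀' hβ]
    calc β * ‖z‖ ≤ ‖b z‖ := mul_norm_le_norm_apply_of_mem_orthogonal_ker hβ hlow hz
      _ = ‖g‖ := by rw [← innerSL_apply_norm ℝ g, ← h.2, map_add, hby, zero_add]
  have hy_le : ‖y‖ ≤ ‖a‖ * ‖z‖ / α := by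
    rw [le_div_iff₀' hα]
    refine mul_le_of_mul_mul_self_le (norm_nonneg _) (by positivity) ?_
    have hay : a (y + z) y = 0 := by
      rw [h.1, ContinuousLinearMap.flip_apply, hby, zero_apply]
    calc α * ‖y‖ * ‖y‖ = α * ‖y‖ ^ 2 := by ring
      _ ≤ a y y := hcoer y hy
      _ = -a z y := by simpa [add_eq_zero_iff_eq_neg] using hay
      _ ≤ ‖a‖ * ‖z‖ * ‖y‖ := (neg_le_abs _).trans (a.le_opNorm₂ z y)
  calc ‖y + z‖ ≤ ‖y‖ + ‖z‖ := norm_add_le _ _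
    _ ≤ ‖a‖ * ‖z‖ / α + ‖z‖ := by gcongr
    _ = (1 + ‖a‖ / α) * ‖z‖ := by ring
    _ ≤ (1 + ‖a‖ / α) * (‖g‖ / β) := by gcongr

lemma IsMixedSolution.norm_add_norm_le (h : IsMixedSolution a b g u σ) (hα : 0 < α)
    (hcoer : ∀ v ∈ b.ker, α * ‖v‖ ^ 2 ≤ a v v) (hβ : 0 < β)
    (hlow : ∀ τ : M, β * ‖τ‖ ≤ ‖rieszAdjoint b τ‖) :
    ‖u‖ + ‖σ‖ ≤ (1 + ‖a‖ / β) * ((1 + ‖a‖ / α) / β) * ‖g‖ := by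
  have hσ : ‖σ‖ ≤ ‖a‖ / β * ‖u‖ := by
    rw [div_mul_eq_mul_div, le_div_iff₀' hβ]
    exact h.mul_norm_right_le hlow
  calc ‖u‖ + ‖σ‖ ≤ (1 + ‖a‖ / β) * ‖u‖ := by linarith
    _ ≤ (1 + ‖a‖ / β) * ((1 + ‖a‖ / α) * (‖g‖ / β)) := by
      gcongr; exact h.norm_left_le hα hcoer hβ hlow
    _ = (1 + ‖a‖ / β) * ((1 + ‖a‖ / α) / β) * ‖g‖ := by ring

lemma IsMixedSolution.unique (h : IsMixedSolution a b g u σ) (h' : IsMixedSolution a b g u' σ')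
    (hα : 0 < α) (hcoer : ∀ v ∈ b.ker, α * ‖v‖ ^ 2 ≤ a v v) (hβ : 0 < β)
    (hlow : ∀ τ : M, β * ‖τ‖ ≤ ‖rieszAdjoint b τ‖) : u = u' ∧ σ = σ' := by
  have := (h.sub h').norm_add_norm_le hα hcoer hβ hlow
  rw [norm_zero, mul_zero] at this
  have hu : ‖u - u'‖ = 0 := by linarith [norm_nonneg (u - u'), norm_nonneg (σ - σ')]
  have hσ : ‖σ - σ'‖ = 0 := by linarith [norm_nonneg (u - u'), norm_nonneg (σ - σ')]
  exact ⟨sub_eq_zero.mp (norm_eq_zero.mp hu), sub_eq_zero.mp (norm_eq_zero.mp hσ)⟩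

lemma exists_isMixedSolution (hα : 0 < α) (hcoer : ∀ v ∈ b.ker, α * ‖v‖ ^ 2 ≤ a v v)
    (hβ : 0 < β) (hlow : ∀ τ : M, β * ‖τ‖ ≤ ‖rieszAdjoint b τ‖) (g : M) :
    ∃ u σ, IsMixedSolution a b g u σ := by
  have : CompleteSpace b.ker := b.isClosed_ker.completeSpace_coe
  obtain ⟨u₁, hu₁⟩ := exists_apply_eq_innerSL hβ hlow g
  obtain ⟨u₀, hu₀, ha⟩ := exists_mem_forall_apply_eq a b.ker hα hcoer (-a u₁)
  have hker : b.ker ≤ (a (u₀ + u₁)).ker := fun v hv ↦ by simp [ha v hv]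
  obtain ⟨σ, hσ⟩ := exists_flip_eq_of_ker_le hβ hlow hker
  have hbu₀ : b u₀ = 0 := hu₀
  exact ⟨u₀ + u₁, σ, hσ.symm, by rw [map_add, hbu₀, zero_add, hu₁]⟩

end Riesz

end MixedProblem

end

theorem stmt2_general {V M : Type*} [NormedAddCommGroup V] [InnerProductSpace ℝ V] [CompleteSpace V]
    [NormedAddCommGroup M] [InnerProductSpace ℝ M] [CompleteSpace M]
    (a : V →L[ℝ] V →L[ℝ] ℝ) (b : V →L[ℝ] M →L[ℝ] ℝ)
    (α : ℝ) (hα : 0 < α)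
    (hcoer : ∀ v : V, (∀ τ : M, b v τ = 0) → α * ‖v‖ ^ 2 ≤ a v v)
    (β : ℝ) (hβ : 0 < β)
    (hinfsup : ∀ τ : M, β * ‖τ‖ ≤ ⨆ v : {v : V // v ≠ 0}, b v τ / ‖(v : V)‖) :
    ∃ C > 0, ∀ g : M,
      (∃! p : V × M,
        (∀ v : V, a p.1 v - b v p.2 = 0) ∧ (∀ τ : M, -(b p.1 τ) = -⟪g, τ⟫)) ∧
      (∀ p : V × M,
        ((∀ v : V, a p.1 v - b v p.2 = 0) ∧ (∀ τ : M, -(b p.1 τ) = -⟪g, τ⟫)) →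
        ‖p.1‖ + ‖p.2‖ ≤ C * ‖g‖) := by
  have hlow := mul_norm_le_norm_rieszAdjoint hinfsup
  have hcoerK : ∀ v ∈ b.ker, α * ‖v‖ ^ 2 ≤ a v v := fun v hv ↦
    hcoer v fun τ ↦ by rw [show b v = 0 from hv, zero_apply]
  refine ⟨(1 + ‖a‖ / β) * ((1 + ‖a‖ / α) / β), by positivity, fun g ↦ ?_⟩
  simp only [isMixedSolution_iff]
  obtain ⟨u, σ, h⟩ := exists_isMixedSolution hα hcoerK hβ hlow g
  refine ⟨⟨(u, σ), h, fun p hp ↦ ?_⟩, fun p hp ↦ hp.norm_add_norm_le hα hcoerK hβ hlow⟩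
  obtain ⟨hu, hσ⟩ := hp.unique h hα hcoerK hβ hlow
  exact Prod.ext hu hσ

/-- Babuška–Brezzi well-posedness of the mixed problem. If the bounded
bilinear form `a` is coercive (with constant `α > 0`) on the kernel of `b`, and `b`
satisfies the inf-sup condition with constant `β > 0`, then for every `g ∈ M` the mixed
problem `a(u,v) − b(v,σ) = 0 ∀v`, `−b(u,τ) = −⟨g,τ⟩ ∀τ` has a unique solution
`(u,σ) ∈ V × M`, and `‖u‖ + ‖σ‖ ≤ C‖g‖` with `C` depending only on `α`, `β` and the
continuity constants. -/
theorem stmt2 {V M : Type*} [NormedAddCommGroup V] [InnerProductSpace ℝ V] [CompleteSpace V]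
    [NormedAddCommGroup M] [InnerProductSpace ℝ M] [CompleteSpace M]
    (a : V →L[ℝ] V →L[ℝ] ℝ) (b : V →L[ℝ] M →L[ℝ] ℝ)
    (hsym : ∀ u v : V, a u v = a v u)
    (α : ℝ) (hα : 0 < α)
    (hcoer : ∀ v : V, (∀ τ : M, b v τ = 0) → α * ‖v‖ ^ 2 ≤ a v v)
    (β : ℝ) (hβ : 0 < β)
    (hinfsup : ∀ τ : M, β * ‖τ‖ ≤ ⨆ v : {v : V // v ≠ 0}, b v τ / ‖(v : V)‖) :
    ∃ C > 0, ∀ g : M,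
      (∃! p : V × M,
        (∀ v : V, a p.1 v - b v p.2 = 0) ∧ (∀ τ : M, -(b p.1 τ) = -⟪g, τ⟫)) ∧
      (∀ p : V × M,
        ((∀ v : V, a p.1 v - b v p.2 = 0) ∧ (∀ τ : M, -(b p.1 τ) = -⟪g, τ⟫)) →
        ‖p.1‖ + ‖p.2‖ ≤ C * ‖g‖) :=
  stmt2_general a b α hα hcoer β hβ hinfsup
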